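/- arXiv:2310.11665 — 5 statements merged into one kernel-verified Lean document; each statement's English description precedes it below -/
import Mathlib

section
/- Let v₁ = (x_{v1}, y_{v1}), v_j = (x_{vj}, y_{vj}), r₁ = (x₁, y₁), r_j = (x_j, y_j), v_o = (x_{vo}, y_{vo}), r_o = (x_o, y_o) be points in ℝ² and let h ∈ ℝ. Assume the base taut-cable equation ‖v₁ − v_o‖² = ‖r₁ − r_o‖² + h² holds. Then the taut-cable equation for index j, ‖v_j − v_o‖² = ‖r_j − r_o‖² + h², holds if and only if the linear equation a_jᵀ x = b_j holds, where x = (x_o, y_o, x_{vo}, y_{vo}) ∈ ℝ⁴. -/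
/-- VVCM linearization of a taut-cable equation (eq. (3b) of the paper):
given the base taut-cable equation for index 1 holds, the taut-cable equation
for index `j` is equivalent to the linear equation `a_jᵀ x = b_j` in the
unknowns `x = (x_o, y_o, x_{vo}, y_{vo})`. -/
theorem taut_cable_iff_linear
    (xv1 yv1 xvj yvj x1 y1 xj yj xvo yvo xo yo h : ℝ)
    (hbase : (xv1 - xvo) ^ 2 + (yv1 - yvo) ^ 2
      = (x1 - xo) ^ 2 + (y1 - yo) ^ 2 + h ^ 2) :
    ((xvj - xvo) ^ 2 + (yvj - yvo) ^ 2
        = (xj - xo) ^ 2 + (yj - yo) ^ 2 + h ^ 2) ↔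
      ((xj - x1) * xo + (yj - y1) * yo
          + (xv1 - xvj) * xvo + (yv1 - yvj) * yvo
        = (1 / 2) * (xv1 ^ 2 + yv1 ^ 2 - xvj ^ 2 - yvj ^ 2
            - x1 ^ 2 - y1 ^ 2 + xj ^ 2 + yj ^ 2)) := by
  constructor
  · intro hj; nlinarith [hbase, hj]
  · intro hl; nlinarith [hbase, hl]
end

section
/- Let k ≥ 1, let v_i = (x_{vi}, y_{vi}) ∈ ℝ² and r_i = (x_i, y_i) ∈ ℝ² for i = 1, …, k, let z_r ∈ ℝ, and let r_o = (x_o, y_o), v_o = (x_{vo}, y_{vo}) ∈ ℝ². Then there exists a height z_o < z_r such that all k taut-cable equations ‖v_i − v_o‖² = ‖r_i − r_o‖² + (z_r − z_o)², i = 1, …, k, hold simultaneously if and only if ‖r₁ − r_o‖² − ‖v₁ − v_o‖² < 0 and a_jᵀ x = b_j for every j = 2, …, k, where x = (x_o, y_o, x_{vo}, y_{vo}) ∈ ℝ⁴. Moreover, in that case z_o = z_r − √(‖v₁ − v_o‖² − ‖r₁ − r_o‖²). -/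
/-- Squared Euclidean norm of a point of the plane. -/
def nsq2 (p : ℝ × ℝ) : ℝ := p.1 ^ 2 + p.2 ^ 2

/-- Form closure condition of the VVCM: the `k` taut-cable equations admit a
common height `z_o < z_r` iff `‖r₁ − r_o‖² − ‖v₁ − v_o‖² < 0` and the linear
equations `a_jᵀ x = b_j` hold for `j = 2, …, k`; moreover in that case
`z_o = z_r − √(‖v₁ − v_o‖² − ‖r₁ − r_o‖²)`. -/
theorem taut_system_iff_linear_system
    (k : ℕ) (hk : 1 ≤ k) (v r : Fin k → ℝ × ℝ) (z_r : ℝ) (ro vo : ℝ × ℝ) :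
    ((∃ z_o : ℝ, z_o < z_r ∧
        ∀ i : Fin k,
          nsq2 (v i - vo) = nsq2 (r i - ro) + (z_r - z_o) ^ 2) ↔
      (nsq2 (r ⟨0, hk⟩ - ro) - nsq2 (v ⟨0, hk⟩ - vo) < 0 ∧
        ∀ j : Fin k, j ≠ ⟨0, hk⟩ →
          ((r j).1 - (r ⟨0, hk⟩).1) * ro.1 + ((r j).2 - (r ⟨0, hk⟩).2) * ro.2
              + ((v ⟨0, hk⟩).1 - (v j).1) * vo.1
              + ((v ⟨0, hk⟩).2 - (v j).2) * vo.2
            = (1 / 2) * ((v ⟨0, hk⟩).1 ^ 2 + (v ⟨0, hk⟩).2 ^ 2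
                - (v j).1 ^ 2 - (v j).2 ^ 2
                - (r ⟨0, hk⟩).1 ^ 2 - (r ⟨0, hk⟩).2 ^ 2
                + (r j).1 ^ 2 + (r j).2 ^ 2)))
    ∧ (∀ z_o : ℝ, z_o < z_r →
        (∀ i : Fin k,
          nsq2 (v i - vo) = nsq2 (r i - ro) + (z_r - z_o) ^ 2) →
        z_o = z_r - Real.sqrt (nsq2 (v ⟨0, hk⟩ - vo) - nsq2 (r ⟨0, hk⟩ - ro))) := by
  set i0 : Fin k := ⟨0, hk⟩
  set c : ℝ := nsq2 (v i0 - vo) - nsq2 (r i0 - ro) with hc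
  constructor
  · constructor
    · rintro ⟨z_o, hz, heq⟩
      have h0 := heq i0
      have hpos : (0:ℝ) < (z_r - z_o) ^ 2 := pow_pos (by linarith) 2
      constructor
      · nlinarith [h0]
      · intro j hj
        have hjeq := heq j
        simp only [nsq2, Prod.fst_sub, Prod.snd_sub] at hjeq h0
        nlinarith [hjeq, h0]
    · rintro ⟨hneg, hlin⟩
      have hcpos : 0 < c := by linarith
      refine ⟨z_r - Real.sqrt c, by nlinarith [Real.sqrt_pos.mpr hcpos], ?_⟩
      intro i
      have hsq : (z_r - (z_r - Real.sqrt c)) ^ 2 = c := by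
        have : z_r - (z_r - Real.sqrt c) = Real.sqrt c := by ring
        rw [this, Real.sq_sqrt hcpos.le]
      rw [hsq]
      by_cases hi : i = i0
      · subst hi; simp [hc]
      · have := hlin i hi
        simp only [hc, nsq2, Prod.fst_sub, Prod.snd_sub] at this ⊢
        linear_combination 2 * this
  · intro z_o hz heq
    have h0 := heq i0
    have hd : z_r - z_o = Real.sqrt c := by
      have hc' : (z_r - z_o) ^ 2 = c := by rw [hc]; linarith
      rw [← hc', Real.sqrt_sq (by linarith)]
    linarith [hd]
end

section
/- Let v_1, …, v_N ∈ ℝ², let c ∈ ℝ, and set r_i = c · v_i for each i (a scaled robot formation). Then for every j = 2, …, N the row vector a_j = (r_j − r_1, v_1 − v_j) ∈ ℝ⁴ equals (c (v_j − v_1), −(v_j − v_1)), so every row of the constraint matrix A₁ (whose rows are a_2, …, a_N) lies in the image of the injective linear map ℝ² → ℝ⁴, w ↦ (c w, −w); consequently rank(A₁) ≤ 2, and rank(A₁) = 2 if and only if the points v_1, …, v_N are not collinear. Moreover b_j = ½(1 − c²)(‖v_1‖² − ‖v_j‖²) for each j; in particular, if ‖v_j‖ = ‖v_1‖ for all j then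 b_j = 0 for all j. -/
def phiMap (c : ℝ) : (ℝ × ℝ) →ₗ[ℝ] (Fin 4 → ℝ) where
  toFun w := ![c * w.1, c * w.2, -w.1, -w.2]
  map_add' w₁ w₂ := by
    funext i; fin_cases i <;> simp <;> ring
  map_smul' a w := by
    funext i; fin_cases i <;> simp <;> ring

theorem phiMap_injective (c : ℝ) : Function.Injective (phiMap c) := by
  intro w₁ w₂ h
  have h₁ : -w₁.1 = -w₂.1 := congrFun h 2
  have h₂ : -w₁.2 = -w₂.2 := congrFun h 3
  exact Prod.ext (neg_inj.mp h₁) (neg_inj.mp h₂)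

theorem phiMap_sub (c : ℝ) (p q : ℝ × ℝ) :
    phiMap c (q - p) =
      ![(c • q).1 - (c • p).1, (c • q).2 - (c • p).2, p.1 - q.1, p.2 - q.2] := by
  funext i
  fin_cases i <;> simp [phiMap, mul_sub]

theorem Matrix.rank_eq_finrank_span_of_row_eq {m n K V : Type*} [Finite m] [Fintype n]
    [Field K] [AddCommGroup V] [Module K V] {A : Matrix m n K} {f : V →ₗ[K] n → K}
    (hf : Function.Injective f) {g : m → V} (hA : ∀ i, A i = f (g i)) :
    A.rank = Module.finrank K (Submodule.span K (Set.range g)) := by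
  have hrows : Set.range A.row = f '' Set.range g := by
    rw [← Set.range_comp]
    exact congrArg Set.range (funext hA)
  rw [A.rank_eq_finrank_span_row, hrows, ← Submodule.map_span]
  exact (Submodule.equivMapOfInjective f hf _).finrank_eq.symm

theorem vectorSpan_range_eq_span_range_vsub_right_comp {k V P ι κ : Type*} [Ring k]
    [AddCommGroup V] [Module k V] [AddTorsor V P] (p : ι → P) (i₀ : ι) {s : κ → ι}
    (hs : ∀ i, i ≠ i₀ → i ∈ Set.range s) :
    vectorSpan k (Set.range p) = Submodule.span k (Set.range fun j => p (s j) -ᵥ p i₀) := by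
  rw [vectorSpan_range_eq_span_range_vsub_right k p i₀]
  refine le_antisymm (Submodule.span_le.mpr ?_) (Submodule.span_mono ?_)
  · rintro _ ⟨i, rfl⟩
    by_cases hi : i = i₀
    · simp [hi]
    · obtain ⟨j, rfl⟩ := hs i hi
      exact Submodule.subset_span ⟨j, rfl⟩
  · rintro _ ⟨j, rfl⟩
    exact ⟨s j, rfl⟩

/-- For a scaled robot formation `r_i = c • v_i`, every row
`a_j = (r_j − r_1, v_1 − v_j)` of the constraint matrix `A₁` equals
`(c (v_j − v_1), −(v_j − v_1))`, i.e. lies in the image of the injective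
linear map `w ↦ (c w, −w)`; consequently `rank A₁ ≤ 2`, with `rank A₁ = 2`
iff the points `v_1, …, v_N` are not collinear. Moreover
`b_j = ½ (1 − c²)(‖v_1‖² − ‖v_j‖²)`; in particular if `‖v_j‖² = ‖v_1‖²`
for all `j` then `b_j = 0` for all `j`. -/
theorem scaled_formation_constraint_matrix
    (N : ℕ) (hN : 3 ≤ N) (c : ℝ) (v : Fin N → ℝ × ℝ) :
    let r : Fin N → ℝ × ℝ := fun i => c • v i
    let i1 : Fin N := ⟨0, by omega⟩
    let jd : Fin (N - 1) → Fin N := fun j => ⟨j.1 + 1, by have := j.2; omega⟩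
    let A1 : Matrix (Fin (N - 1)) (Fin 4) ℝ := fun j =>
      ![(r (jd j)).1 - (r i1).1, (r (jd j)).2 - (r i1).2,
        (v i1).1 - (v (jd j)).1, (v i1).2 - (v (jd j)).2]
    let b : Fin (N - 1) → ℝ := fun j =>
      (1 / 2) * ((v i1).1 ^ 2 + (v i1).2 ^ 2 - (v (jd j)).1 ^ 2 - (v (jd j)).2 ^ 2
        - (r i1).1 ^ 2 - (r i1).2 ^ 2 + (r (jd j)).1 ^ 2 + (r (jd j)).2 ^ 2)
    (∀ j, A1 j = phiMap c (v (jd j) - v i1)) ∧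
    Function.Injective ⇑(phiMap c) ∧
    A1.rank ≤ 2 ∧
    (A1.rank = 2 ↔ ¬ Collinear ℝ (Set.range v)) ∧
    (∀ j, b j = (1 / 2) * (1 - c ^ 2) * (nsq2 (v i1) - nsq2 (v (jd j)))) ∧
    ((∀ j, nsq2 (v j) = nsq2 (v i1)) → ∀ j, b j = 0) := by
  intro r i1 jd A1 b
  have hrow : ∀ j, A1 j = phiMap c (v (jd j) - v i1) := fun j => (phiMap_sub c _ _).symm
  have hjd : ∀ i, i ≠ i1 → i ∈ Set.range jd := fun i hi =>
    ⟨⟨i - 1, by omega⟩, Fin.ext (by simp only [ne_eq, Fin.ext_iff, i1, jd] at hi ⊢; omega)⟩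
  have hrank : A1.rank = Module.finrank ℝ (vectorSpan ℝ (Set.range v)) := by
    rw [vectorSpan_range_eq_span_range_vsub_right_comp v i1 hjd]
    exact Matrix.rank_eq_finrank_span_of_row_eq (phiMap_injective c) hrow
  have hb : ∀ j, b j = (1 / 2) * (1 - c ^ 2) * (nsq2 (v i1) - nsq2 (v (jd j))) := by
    intro j
    simp only [b, r, nsq2, Prod.smul_fst, Prod.smul_snd, smul_eq_mul]
    ring
  have hle : Module.finrank ℝ (vectorSpan ℝ (Set.range v)) ≤ 2 := by
    simpa using Submodule.finrank_le (vectorSpan ℝ (Set.range v))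
  refine ⟨hrow, phiMap_injective c, hrank ▸ hle, ?_, hb, fun hnorm j => by simp [hb, hnorm]⟩
  rw [hrank, collinear_iff_finrank_le_one]
  omega
end

section
/- Let N ≥ 3, r_s > 0, r_f > 0, and define u_i = (cos(2πi/N), sin(2πi/N)), v_i = r_s u_i, r_i = r_f u_i for i = 1, …, N. Suppose r_o, v_o ∈ ℝ² and h > 0 satisfy the N taut-cable equations ‖v_i − v_o‖² = ‖r_i − r_o‖² + h² for all i = 1, …, N. Then r_f · r_o = r_s · v_o (so the projected object position and the contact point are proportional), and h² = (r_s² − r_f²)(1 − ‖v_o‖²/r_f²). -/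
/-- In a regular `N`-gon configuration (`N ≥ 3`, sheet vertices `v_i = r_s u_i`,
robots `r_i = r_f u_i`), if all `N` taut-cable equations hold with height drop
`h > 0`, then `r_f • r_o = r_s • v_o` and
`h² = (r_s² − r_f²)(1 − ‖v_o‖²/r_f²)`. -/
theorem regular_polygon_taut_solution
    (N : ℕ) (hN : 3 ≤ N) (r_s r_f : ℝ) (hrs : 0 < r_s) (hrf : 0 < r_f)
    (ro vo : ℝ × ℝ) (h : ℝ) (hh : 0 < h)
    (taut : ∀ i : Fin N,
      nsq2 (r_s • (Real.cos (2 * Real.pi * ((i.1 : ℝ) + 1) / N),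
                   Real.sin (2 * Real.pi * ((i.1 : ℝ) + 1) / N)) - vo)
        = nsq2 (r_f • (Real.cos (2 * Real.pi * ((i.1 : ℝ) + 1) / N),
                       Real.sin (2 * Real.pi * ((i.1 : ℝ) + 1) / N)) - ro)
          + h ^ 2) :
    r_f • ro = r_s • vo ∧
      h ^ 2 = (r_s ^ 2 - r_f ^ 2) * (1 - nsq2 vo / r_f ^ 2) := by
  have hNR : (0:ℝ) < N := by exact_mod_cast Nat.lt_of_lt_of_le (by norm_num) hN
  set θ : ℝ := 2 * Real.pi / N with hθ
  have hθpos : 0 < θ := by positivity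
  have hθlt : θ < Real.pi := by
    rw [hθ, div_lt_iff₀ hNR]
    have h3 : (3:ℝ) ≤ N := by exact_mod_cast hN
    nlinarith [Real.pi_pos]
  have hs : 0 < Real.sin θ := Real.sin_pos_of_pos_of_lt_pi hθpos hθlt
  set c : ℝ := Real.cos θ with hc
  set s : ℝ := Real.sin θ with hsr
  have hpyth : s ^ 2 + c ^ 2 = 1 := Real.sin_sq_add_cos_sq θ
  have hclt : c < 1 := by nlinarith
  -- the three equations
  have e1 := taut ⟨0, by omega⟩
  have e2 := taut ⟨1, by omega⟩
  have e3 := taut ⟨2, by omega⟩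
  simp only [nsq2, Prod.smul_mk, Prod.fst_sub, Prod.snd_sub, smul_eq_mul] at e1 e2 e3
  norm_num at e1 e2 e3
  have a1 : 2 * Real.pi / N = θ := hθ.symm
  have a2 : 2 * Real.pi * 2 / N = 2 * θ := by rw [hθ]; ring
  have a3 : 2 * Real.pi * 3 / N = 2 * θ + θ := by rw [hθ]; ring
  rw [a1] at e1
  rw [a2, Real.cos_two_mul, Real.sin_two_mul] at e2
  rw [a3, Real.cos_add, Real.sin_add, Real.cos_two_mul, Real.sin_two_mul] at e3
  rw [← hc, ← hsr] at e1 e2 e3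
  -- linear system in w = r_f ro - r_s vo
  have hA : (1 - c) * (2 * c + 1) * (r_f * ro.1 - r_s * vo.1)
      + s * (1 - 2 * c) * (r_f * ro.2 - r_s * vo.2) = 0 := by
    linear_combination (e1 - e2) / 2 + ((r_f ^ 2 - r_s ^ 2) * (1 - 4 * c ^ 2) / 2) * hpyth
  have hB : (1 - c) * (4 * c ^ 2 + 2 * c - 1) * (r_f * ro.1 - r_s * vo.1)
      + s * (1 + 2 * c - 4 * c ^ 2) * (r_f * ro.2 - r_s * vo.2) = 0 := by
    linear_combination (e2 - e3) / 2
      + ((r_s ^ 2 - r_f ^ 2) * (1 / 2 - 2 * c ^ 2 + 2 * c ^ 2 * s ^ 2 + 2 * c ^ 4)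
          - 2 * c * (r_f * ro.1 - r_s * vo.1)) * hpyth
  have hdet : (0:ℝ) < 2 * (1 - c) * s :=
    mul_pos (mul_pos (by norm_num) (by linarith)) hs
  have hx : r_f * ro.1 - r_s * vo.1 = 0 := by
    have h0 : 2 * (1 - c) * s * (r_f * ro.1 - r_s * vo.1) = 0 := by
      linear_combination s * (1 + 2 * c - 4 * c ^ 2) * hA - s * (1 - 2 * c) * hB
    exact (mul_eq_zero.mp h0).resolve_left (ne_of_gt hdet)
  have hy : r_f * ro.2 - r_s * vo.2 = 0 := by
    have h0 : 2 * (1 - c) * s * (r_f * ro.2 - r_s * vo.2) = 0 := by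
      linear_combination (1 - c) * (2 * c + 1) * hB - (1 - c) * (4 * c ^ 2 + 2 * c - 1) * hA
    exact (mul_eq_zero.mp h0).resolve_left (ne_of_gt hdet)
  have key : h ^ 2 * r_f ^ 2 = (r_s ^ 2 - r_f ^ 2) * (r_f ^ 2 - (vo.1 ^ 2 + vo.2 ^ 2)) := by
    linear_combination (-(r_f ^ 2)) * e1 + (r_s ^ 2 * r_f ^ 2 - r_f ^ 4) * hpyth
      + (2 * c * r_f ^ 2 - r_f * ro.1 - r_s * vo.1) * hx
      + (2 * s * r_f ^ 2 - r_f * ro.2 - r_s * vo.2) * hy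
  constructor
  · ext
    · simpa [smul_eq_mul] using sub_eq_zero.mp hx
    · simpa [smul_eq_mul] using sub_eq_zero.mp hy
  · rw [nsq2]
    have hrf2 : (r_f:ℝ) ^ 2 ≠ 0 := by positivity
    field_simp
    linear_combination key
end

section
/- (Uniqueness of the all-taut equilibrium for a regular formation.) Let N ≥ 3, 0 < r_f < r_s, and define u_i = (cos(2πi/N), sin(2πi/N)), v_i = r_s u_i, r_i = r_f u_i for i = 1, …, N. Let z_r be a real number and suppose r_o, v_o ∈ ℝ² and z_o with 0 < z_o < z_r satisfy all N taut-cable equations ‖v_i − v_o‖² = ‖r_i − r_o‖² + (z_r − z_o)². Then z_o ≥ z_r − √(r_s² − r_f²), and equality z_o = z_r − √(r_s² − r_f²) holds if and only if v_o = (0,0) and r_o = (0,0). In particular, the minimum-potential-energy configuration with all N virtual cables taut is unique: the contact point is the center of the sheet and the object projects to the center of the robot formation, with object height z_o = z_r − √(r_s² − r_f²). -/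
lemma sum_cos_sin_zero (N : ℕ) (hN : 3 ≤ N) :
    (∑ i : Fin N, Real.cos (2 * Real.pi * ((i.1 : ℝ) + 1) / N)) = 0 ∧
    (∑ i : Fin N, Real.sin (2 * Real.pi * ((i.1 : ℝ) + 1) / N)) = 0 := by
  have hN0 : (N : ℂ) ≠ 0 := Nat.cast_ne_zero.mpr (by omega)
  set ζ : ℂ := Complex.exp (2 * Real.pi * Complex.I / N) with hζ
  have hζN : ζ ^ N = 1 := by
    rw [hζ, ← Complex.exp_nat_mul]
    rw [show (N : ℂ) * (2 * Real.pi * Complex.I / N) = 2 * Real.pi * Complex.I by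
      field_simp]
    exact Complex.exp_two_pi_mul_I
  have hζ1 : ζ ≠ 1 := by
    intro heq
    rw [hζ, Complex.exp_eq_one_iff] at heq
    obtain ⟨n, hn⟩ := heq
    have hI : (2 * (Real.pi : ℂ) * Complex.I) ≠ 0 := by
      simp [Real.pi_ne_zero, Complex.I_ne_zero]
    have h1 : ((n * N : ℤ) : ℂ) = 1 := by
      have e2 : (n : ℂ) * (2 * Real.pi * Complex.I) * N = 2 * Real.pi * Complex.I := by
        rw [← hn]; field_simp
      have e3 : ((n : ℤ) : ℂ) * (N : ℂ) * (2 * Real.pi * Complex.I)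
          = 1 * (2 * Real.pi * Complex.I) := by linear_combination e2
      have := mul_right_cancel₀ hI e3
      push_cast
      linear_combination this
    have h2 : (n * N : ℤ) = 1 := by exact_mod_cast h1
    have hN3 : (3 : ℤ) ≤ (N : ℤ) := by exact_mod_cast hN
    rcases le_or_gt n 0 with hn0 | hn0
    · nlinarith
    · have : 1 ≤ n := hn0
      nlinarith
  have hgeom : ∑ k ∈ Finset.range N, ζ ^ k = 0 := by
    rw [geom_sum_eq hζ1, hζN]; simp
  have hsum : ∑ i : Fin N,
      Complex.exp (((2 * Real.pi * ((i.1 : ℝ) + 1) / N : ℝ) : ℂ) * Complex.I) = 0 := by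
    have key : ∀ k : ℕ, Complex.exp (((2 * Real.pi * ((k : ℝ) + 1) / N : ℝ) : ℂ) * Complex.I)
        = ζ ^ (k + 1) := by
      intro k
      rw [hζ, ← Complex.exp_nat_mul]
      congr 1
      have hNr : (N : ℝ) ≠ 0 := Nat.cast_ne_zero.mpr (by omega)
      push_cast
      field_simp
    rw [Fin.sum_univ_eq_sum_range (fun k => Complex.exp (((2 * Real.pi * ((k : ℝ) + 1) / N : ℝ) : ℂ) * Complex.I))]
    calc ∑ k ∈ Finset.range N, Complex.exp (((2 * Real.pi * ((k : ℝ) + 1) / N : ℝ) : ℂ) * Complex.I)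
        = ∑ k ∈ Finset.range N, ζ ^ k * ζ := by
          refine Finset.sum_congr rfl fun k _ => by rw [key k, pow_succ]
      _ = 0 := by rw [← Finset.sum_mul, hgeom, zero_mul]
  constructor
  · calc (∑ i : Fin N, Real.cos (2 * Real.pi * ((i.1 : ℝ) + 1) / N))
        = ∑ i : Fin N, (Complex.exp (((2 * Real.pi * ((i.1 : ℝ) + 1) / N : ℝ) : ℂ) * Complex.I)).re :=
          Finset.sum_congr rfl fun i _ => (Complex.exp_ofReal_mul_I_re _).symm
      _ = (∑ i : Fin N, Complex.exp (((2 * Real.pi * ((i.1 : ℝ) + 1) / N : ℝ) : ℂ) * Complex.I)).re :=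
          (Complex.re_sum _ _).symm
      _ = 0 := by rw [hsum]; simp
  · calc (∑ i : Fin N, Real.sin (2 * Real.pi * ((i.1 : ℝ) + 1) / N))
        = ∑ i : Fin N, (Complex.exp (((2 * Real.pi * ((i.1 : ℝ) + 1) / N : ℝ) : ℂ) * Complex.I)).im :=
          Finset.sum_congr rfl fun i _ => (Complex.exp_ofReal_mul_I_im _).symm
      _ = (∑ i : Fin N, Complex.exp (((2 * Real.pi * ((i.1 : ℝ) + 1) / N : ℝ) : ℂ) * Complex.I)).im :=
          (Complex.im_sum _ _).symm
      _ = 0 := by rw [hsum]; simp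

set_option maxHeartbeats 1000000 in
/-- Uniqueness of the all-taut equilibrium for a regular formation
(Lemma 2 of the paper): if all `N` cables of the regular `N`-gon
configuration are taut at object data `(r_o, v_o, z_o)` with
`0 < z_o < z_r`, then `z_o ≥ z_r − √(r_s² − r_f²)`, with equality iff
`v_o = (0,0)` and `r_o = (0,0)`. -/
theorem regular_polygon_all_taut_unique
    (N : ℕ) (hN : 3 ≤ N) (r_f r_s z_r z_o : ℝ)
    (hrf : 0 < r_f) (hfs : r_f < r_s)
    (ro vo : ℝ × ℝ) (hz0 : 0 < z_o) (hzz : z_o < z_r)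
    (taut : ∀ i : Fin N,
      nsq2 (r_s • (Real.cos (2 * Real.pi * ((i.1 : ℝ) + 1) / N),
                   Real.sin (2 * Real.pi * ((i.1 : ℝ) + 1) / N)) - vo)
        = nsq2 (r_f • (Real.cos (2 * Real.pi * ((i.1 : ℝ) + 1) / N),
                       Real.sin (2 * Real.pi * ((i.1 : ℝ) + 1) / N)) - ro)
          + (z_r - z_o) ^ 2) :
    z_r - Real.sqrt (r_s ^ 2 - r_f ^ 2) ≤ z_o ∧
      (z_o = z_r - Real.sqrt (r_s ^ 2 - r_f ^ 2) ↔
        vo = ((0 : ℝ), (0 : ℝ)) ∧ ro = ((0 : ℝ), (0 : ℝ))) := by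
  obtain ⟨hSc, hSs⟩ := sum_cos_sin_zero N hN
  have hNr : (0 : ℝ) < N := by positivity
  set h := z_r - z_o with hhdef
  have hhpos : 0 < h := by simp only [hhdef]; linarith
  set a := 2 * (r_s * vo.1 - r_f * ro.1) with hadef
  set b := 2 * (r_s * vo.2 - r_f * ro.2) with hbdef
  have E : ∀ i : Fin N,
      a * Real.cos (2 * Real.pi * ((i.1 : ℝ) + 1) / N)
        + b * Real.sin (2 * Real.pi * ((i.1 : ℝ) + 1) / N)
        = r_s ^ 2 - r_f ^ 2 + nsq2 vo - nsq2 ro - h ^ 2 := by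
    intro i
    have ht := taut i
    have hpyth := Real.sin_sq_add_cos_sq (2 * Real.pi * ((i.1 : ℝ) + 1) / N)
    simp only [nsq2, Prod.smul_mk, smul_eq_mul, Prod.fst_sub, Prod.snd_sub] at ht
    simp only [hadef, hbdef, nsq2]
    nlinarith [ht, hpyth]
  -- sum the equations to get the constant equal to zero
  have hc0 : r_s ^ 2 - r_f ^ 2 + nsq2 vo - nsq2 ro - h ^ 2 = 0 := by
    have hsum : ∑ i : Fin N,
        (a * Real.cos (2 * Real.pi * ((i.1 : ℝ) + 1) / N)
          + b * Real.sin (2 * Real.pi * ((i.1 : ℝ) + 1) / N))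
        = ∑ _i : Fin N, (r_s ^ 2 - r_f ^ 2 + nsq2 vo - nsq2 ro - h ^ 2) :=
      Finset.sum_congr rfl fun i _ => by rw [E i]
    rw [Finset.sum_add_distrib, ← Finset.mul_sum, ← Finset.mul_sum, hSc, hSs,
      Finset.sum_const, Finset.card_univ, Fintype.card_fin, nsmul_eq_mul] at hsum
    have hNC : (N : ℝ) * (r_s ^ 2 - r_f ^ 2 + nsq2 vo - nsq2 ro - h ^ 2) = 0 := by
      linarith [hsum]
    exact (mul_eq_zero.mp hNC).resolve_left (ne_of_gt hNr)
  -- use the equations at i = 0 and i = 1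
  have hφpos : 0 < 2 * Real.pi / N := by positivity
  have hφlt : 2 * Real.pi / N < Real.pi := by
    rw [div_lt_iff₀ hNr]
    have h3 : (3 : ℝ) ≤ N := by exact_mod_cast hN
    have : 3 * Real.pi ≤ N * Real.pi :=
      mul_le_mul_of_nonneg_right h3 Real.pi_pos.le
    linarith [Real.pi_pos]
  have hsφ : 0 < Real.sin (2 * Real.pi / N) := Real.sin_pos_of_pos_of_lt_pi hφpos hφlt
  have e1 : a * Real.cos (2 * Real.pi / N) + b * Real.sin (2 * Real.pi / N) = 0 := by
    have h' := E ⟨0, by omega⟩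
    rw [show 2 * Real.pi * (((0 : ℕ) : ℝ) + 1) / N = 2 * Real.pi / N by push_cast; ring] at h'
    rw [h', hc0]
  have e2 : a * Real.cos (2 * (2 * Real.pi / N)) + b * Real.sin (2 * (2 * Real.pi / N)) = 0 := by
    have h' := E ⟨1, by omega⟩
    rw [show 2 * Real.pi * (((1 : ℕ) : ℝ) + 1) / N = 2 * (2 * Real.pi / N) by push_cast; ring] at h'
    rw [h', hc0]
  rw [Real.cos_two_mul, Real.sin_two_mul] at e2
  have ha : a = 0 := by
    linear_combination 2 * Real.cos (2 * Real.pi / N) * e1 - e2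
  have hb : b = 0 := by
    have : b * Real.sin (2 * Real.pi / N) = 0 := by
      linear_combination e1 - Real.cos (2 * Real.pi / N) * ha
    exact (mul_eq_zero.mp this).resolve_right (ne_of_gt hsφ)
  -- extract the algebraic relations
  have hv1 : r_s * vo.1 = r_f * ro.1 := by simp only [hadef] at ha; linarith
  have hv2 : r_s * vo.2 = r_f * ro.2 := by simp only [hbdef] at hb; linarith
  have hs : 0 < r_s ^ 2 - r_f ^ 2 := by nlinarith
  have hc : h ^ 2 = r_s ^ 2 - r_f ^ 2 + nsq2 vo - nsq2 ro := by linarith [hc0]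
  have key : r_f ^ 2 * h ^ 2 = (r_s ^ 2 - r_f ^ 2) * (r_f ^ 2 - nsq2 vo) := by
    simp only [nsq2] at hc ⊢
    linear_combination r_f ^ 2 * hc + (r_s * vo.1 + r_f * ro.1) * hv1
      + (r_s * vo.2 + r_f * ro.2) * hv2
  have hvnn : 0 ≤ nsq2 vo := by simp only [nsq2]; positivity
  have hrf2 : (0 : ℝ) < r_f ^ 2 := by positivity
  have hsv : 0 ≤ (r_s ^ 2 - r_f ^ 2) * nsq2 vo := mul_nonneg hs.le hvnn
  have hh2 : h ^ 2 ≤ r_s ^ 2 - r_f ^ 2 := by nlinarith [key, hsv, hrf2]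
  have hhs : h ≤ Real.sqrt (r_s ^ 2 - r_f ^ 2) := by
    rw [show h = Real.sqrt (h ^ 2) by rw [Real.sqrt_sq hhpos.le]]
    exact Real.sqrt_le_sqrt hh2
  constructor
  · simp only [hhdef] at hhs; linarith [hhs]
  · constructor
    · intro heq
      have hheq : h = Real.sqrt (r_s ^ 2 - r_f ^ 2) := by
        simp only [hhdef]; rw [heq]; ring
      have hh2eq : h ^ 2 = r_s ^ 2 - r_f ^ 2 := by
        rw [hheq, Real.sq_sqrt hs.le]
      have hv0 : (r_s ^ 2 - r_f ^ 2) * nsq2 vo = 0 := by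
        simp only [nsq2] at key ⊢
        linear_combination key - r_f ^ 2 * hh2eq
      have hvo : nsq2 vo = 0 := (mul_eq_zero.mp hv0).resolve_left (ne_of_gt hs)
      have hvo1 : vo.1 = 0 := by
        simp only [nsq2] at hvo
        nlinarith [sq_nonneg vo.1, sq_nonneg vo.2]
      have hvo2 : vo.2 = 0 := by
        simp only [nsq2] at hvo
        nlinarith [sq_nonneg vo.1, sq_nonneg vo.2]
      have hro1 : ro.1 = 0 := by
        have hz : r_f * ro.1 = 0 := by rw [← hv1, hvo1]; ring
        exact (mul_eq_zero.mp hz).resolve_left (ne_of_gt hrf)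
      have hro2 : ro.2 = 0 := by
        have hz : r_f * ro.2 = 0 := by rw [← hv2, hvo2]; ring
        exact (mul_eq_zero.mp hz).resolve_left (ne_of_gt hrf)
      exact ⟨Prod.ext hvo1 hvo2, Prod.ext hro1 hro2⟩
    · rintro ⟨hvo, hro⟩
      have hvo0 : nsq2 vo = 0 := by rw [hvo]; simp [nsq2]
      have hh2eq : h ^ 2 = r_s ^ 2 - r_f ^ 2 := by
        have hk : r_f ^ 2 * h ^ 2 = r_f ^ 2 * (r_s ^ 2 - r_f ^ 2) := by
          rw [key, hvo0]; ring
        exact mul_left_cancel₀ (ne_of_gt hrf2) hk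
      have hfin : h = Real.sqrt (r_s ^ 2 - r_f ^ 2) := by
        rw [← hh2eq, Real.sqrt_sq hhpos.le]
      simp only [hhdef] at hfin
      linarith [hfin]
end
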